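/- arXiv:0707.4600 — 8 statements merged into one kernel-verified Lean document; each statement's English description precedes it below -/
import Mathlib

section
/- For each z > 0 there exists a unique finite nonnegative Borel measure ϑ_e^z on ℍ₊ such that ϑ_e^z([x,∞)×[y,∞)) = α ∫₀^∞ ϑ([x + u z⁻¹, ∞) × [y + u, ∞)) du for all x ∈ [0,∞) and y ∈ ℝ; moreover, this measure is given explicitly by ϑ_e^z(B) = α ∫₀^∞ ϑ(B + (u z⁻¹, u)) du for every Borel set B ⊆ ℍ₊. -/
open MeasureTheory Set Filter Topology

noncomputable section

/-- The right half-plane `ℍ₊ = [0,∞) × ℝ`, as a subset of `ℝ × ℝ`. -/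
def Hplus : Set (ℝ × ℝ) := {p | 0 ≤ p.1}

/-- Translation of a set: `B + w = {b + w : b ∈ B}`. -/
def shiftSet (B : Set (ℝ × ℝ)) (w : ℝ × ℝ) : Set (ℝ × ℝ) := (fun b => b + w) '' B

/-!
`ϑ_e^z` is the image of `Leb|(0,∞) ⊗ ϑ` under `(u, p) ↦ p - (u/z, u)`, restricted to `ℍ₊` and
scaled by `α`; the explicit formula on Borel sets is then Tonelli, and its total mass is finite by
the layer-cake formula `∫₀^∞ ϑ{x ≥ u/z} du = z ∫ x dϑ`. Quadrants `[x,∞) × [y,∞)` form a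
π-system generating the Borel σ-algebra of the plane, and a measure vanishing on `{x < 0}` has
the same mass on `[x,∞) × [y,∞)` as on `[max x 0,∞) × [y,∞) ⊆ ℍ₊`; so the quadrant formula for
`x ≥ 0` determines a finite measure, which gives uniqueness.
-/

lemma shiftSet_eq_preimage (B : Set (ℝ × ℝ)) (w : ℝ × ℝ) :
    shiftSet B w = (· - w) ⁻¹' B := by
  ext p
  constructor
  · rintro ⟨b, hb, rfl⟩
    simpa using hb
  · exact fun hp => ⟨p - w, hp, sub_add_cancel p w⟩

lemma shiftSet_Ici_prod_Ici (a b c d : ℝ) :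
    shiftSet (Ici a ×ˢ Ici b) (c, d) = Ici (a + c) ×ˢ Ici (b + d) := by
  ext p
  simp only [shiftSet_eq_preimage, mem_preimage, mem_prod, mem_Ici, Prod.fst_sub, Prod.snd_sub,
    le_sub_iff_add_le]

lemma shiftSet_Hplus (c d : ℝ) : shiftSet Hplus (c, d) = {p | c ≤ p.1} := by
  ext p
  simp [shiftSet_eq_preimage, Hplus]

lemma measurableSet_Hplus : MeasurableSet Hplus :=
  measurableSet_le measurable_const measurable_fst

lemma Hplus_eq_compl : Hplus = {p : ℝ × ℝ | p.1 < 0}ᶜ := by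
  ext p
  simp [Hplus]

lemma exists_nat_neg_le (x : ℝ) : ∃ n : ℕ, -(n : ℝ) ≤ x :=
  (exists_nat_ge (-x)).imp fun _ hn => neg_le.mp hn

lemma iUnion_Ici_neg_natCast_prod : ⋃ n : ℕ, Ici (-(n : ℝ)) ×ˢ Ici (-(n : ℝ)) = univ := by
  refine eq_univ_of_forall fun p => mem_iUnion.mpr ?_
  obtain ⟨m, hm⟩ := exists_nat_neg_le p.1
  obtain ⟨n, hn⟩ := exists_nat_neg_le p.2
  refine ⟨max m n, ?_, ?_⟩ <;> simp only [mem_Ici, Nat.cast_max, neg_le] at * <;>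
    [exact le_max_of_le_left hm; exact le_max_of_le_right hn]

lemma isCountablySpanning_range_Ici : IsCountablySpanning (range (Ici : ℝ → Set ℝ)) := by
  refine ⟨fun n => Ici (-(n : ℝ)), fun n => mem_range_self _, ?_⟩
  exact eq_univ_of_forall fun x => mem_iUnion.mpr ((exists_nat_neg_le x).imp fun _ h => h)

lemma borel_prod_eq_generateFrom_Ici_prod_Ici :
    (inferInstance : MeasurableSpace (ℝ × ℝ)) = MeasurableSpace.generateFrom
      (image2 (· ×ˢ ·) (range (Ici : ℝ → Set ℝ)) (range (Ici : ℝ → Set ℝ))) := by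
  rw [← generateFrom_prod_eq isCountablySpanning_range_Ici isCountablySpanning_range_Ici,
    ← borel_eq_generateFrom_Ici, ← BorelSpace.measurable_eq]

lemma MeasureTheory.Measure.ext_of_Ici_prod_Ici {μ ν : Measure (ℝ × ℝ)} [IsFiniteMeasure μ]
    (h : ∀ x y : ℝ, μ (Ici x ×ˢ Ici y) = ν (Ici x ×ˢ Ici y)) : μ = ν := by
  refine Measure.ext_of_generateFrom_of_iUnion _ _ borel_prod_eq_generateFrom_Ici_prod_Ici
    (isPiSystem_Ici.prod isPiSystem_Ici) iUnion_Ici_neg_natCast_prod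
    (fun n => mem_image2_of_mem (mem_range_self _) (mem_range_self _))
    (fun _ => measure_ne_top μ _) ?_
  rintro _ ⟨_, ⟨x, rfl⟩, _, ⟨y, rfl⟩, rfl⟩
  exact h x y

lemma measure_Ici_prod_Ici_eq_max {μ : Measure (ℝ × ℝ)} (hμ : μ {p | p.1 < 0} = 0) (x y : ℝ) :
    μ (Ici x ×ˢ Ici y) = μ (Ici (max x 0) ×ˢ Ici y) := by
  have : Ici (max x 0) ×ˢ Ici y = Ici x ×ˢ Ici y \ {p | p.1 < 0} := by
    ext p
    simp only [mem_prod, mem_Ici, Set.mem_sdiff, mem_ofPred_eq, not_lt, max_le_iff]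
    tauto
  rw [this, measure_sdiff_null hμ]

def sweep {X : Type*} [MeasurableSpace X] (ρ : Measure X) (γ : X → ℝ × ℝ)
    (ϑ : Measure (ℝ × ℝ)) : Measure (ℝ × ℝ) :=
  (ρ.prod ϑ).map fun q => q.2 - γ q.1

lemma sweep_apply {X : Type*} [MeasurableSpace X] (ρ : Measure X) {γ : X → ℝ × ℝ}
    (hγ : Measurable γ) (ϑ : Measure (ℝ × ℝ)) [SFinite ϑ] {B : Set (ℝ × ℝ)}
    (hB : MeasurableSet B) : sweep ρ γ ϑ B = ∫⁻ u, ϑ (shiftSet B (γ u)) ∂ρ := by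
  have hmeas : Measurable fun q : X × (ℝ × ℝ) => q.2 - γ q.1 :=
    measurable_snd.sub (hγ.comp measurable_fst)
  rw [sweep, Measure.map_apply hmeas hB, Measure.prod_apply (hmeas hB)]
  simp only [shiftSet_eq_preimage]
  rfl

/-- The measure `ϑ_e^z`. -/
def edgeMeasure (α z : ℝ) (ϑ : Measure (ℝ × ℝ)) : Measure (ℝ × ℝ) :=
  ENNReal.ofReal α • (sweep (volume.restrict (Ioi 0)) (fun u => (u / z, u)) ϑ).restrict Hplus

section EdgeMeasure

variable (α z : ℝ) (ϑ : Measure (ℝ × ℝ))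

lemma edgeMeasure_apply [SFinite ϑ] {B : Set (ℝ × ℝ)} (hB : MeasurableSet B) (hBH : B ⊆ Hplus) :
    edgeMeasure α z ϑ B = ENNReal.ofReal α * ∫⁻ u in Ioi 0, ϑ (shiftSet B (u / z, u)) := by
  rw [edgeMeasure, Measure.smul_apply, smul_eq_mul, Measure.restrict_apply hB,
    inter_eq_self_of_subset_left hBH, sweep_apply _ (by fun_prop) _ hB]

lemma edgeMeasure_setOf_fst_neg : edgeMeasure α z ϑ {p | p.1 < 0} = 0 := by
  rw [edgeMeasure, Measure.smul_apply, Measure.restrict_apply (measurableSet_lt (by fun_prop)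
    measurable_const), Hplus_eq_compl, inter_compl_self, measure_empty, smul_zero]

lemma edgeMeasure_Ici_prod_Ici [SFinite ϑ] {x : ℝ} (hx : 0 ≤ x) (y : ℝ) :
    edgeMeasure α z ϑ (Ici x ×ˢ Ici y)
      = ENNReal.ofReal α * ∫⁻ u in Ioi 0, ϑ (Ici (x + u / z) ×ˢ Ici (y + u)) := by
  rw [edgeMeasure_apply α z ϑ (measurableSet_Ici.prod measurableSet_Ici)
    fun p hp => hx.trans hp.1]
  simp only [shiftSet_Ici_prod_Ici]

lemma edgeMeasure_univ [SFinite ϑ] (hz : 0 < z) (hϑ : ϑ {p | p.1 < 0} = 0) :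
    edgeMeasure α z ϑ univ
      = ENNReal.ofReal α * (ENNReal.ofReal z * ∫⁻ p, ENNReal.ofReal p.1 ∂ϑ) := by
  have hshift (u : ℝ) : shiftSet Hplus (u / z, u) = {p | u ≤ z * p.1} := by
    ext p
    rw [shiftSet_Hplus, mem_ofPred_eq, mem_ofPred_eq, div_le_iff₀' hz]
  have hnonneg : 0 ≤ᵐ[ϑ] fun p => z * p.1 := by
    refine (measure_eq_zero_iff_ae_notMem.mp hϑ).mono fun p hp => ?_
    exact mul_nonneg hz.le (not_lt.mp hp)
  rw [edgeMeasure, Measure.smul_apply, smul_eq_mul, Measure.restrict_apply_univ,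
    sweep_apply _ (by fun_prop) _ measurableSet_Hplus]
  simp_rw [hshift, ← lintegral_eq_lintegral_meas_le ϑ hnonneg (by fun_prop),
    ENNReal.ofReal_mul hz.le]
  rw [lintegral_const_mul _ (by fun_prop)]

lemma isFiniteMeasure_edgeMeasure [SFinite ϑ] (hz : 0 < z) (hϑ : ϑ {p | p.1 < 0} = 0)
    (hmean : ∫⁻ p, ENNReal.ofReal p.1 ∂ϑ ≠ ⊤) : IsFiniteMeasure (edgeMeasure α z ϑ) :=
  ⟨by
    rw [edgeMeasure_univ α z ϑ hz hϑ]
    exact ENNReal.mul_lt_top ENNReal.ofReal_lt_top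
      (ENNReal.mul_lt_top ENNReal.ofReal_lt_top hmean.lt_top)⟩

end EdgeMeasure

def IsEdgeMeasure (α z : ℝ) (ϑ τ : Measure (ℝ × ℝ)) : Prop :=
  IsFiniteMeasure τ ∧ τ {p : ℝ × ℝ | p.1 < 0} = 0 ∧
    ∀ x : ℝ, 0 ≤ x → ∀ y : ℝ,
      τ (Ici x ×ˢ Ici y)
        = ENNReal.ofReal α * ∫⁻ u in Ioi (0 : ℝ), ϑ (Ici (x + u / z) ×ˢ Ici (y + u))

lemma isEdgeMeasure_edgeMeasure (α : ℝ) {z : ℝ} (hz : 0 < z) {ϑ : Measure (ℝ × ℝ)} [SFinite ϑ]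
    (hϑ : ϑ {p | p.1 < 0} = 0) (hmean : ∫⁻ p, ENNReal.ofReal p.1 ∂ϑ ≠ ⊤) :
    IsEdgeMeasure α z ϑ (edgeMeasure α z ϑ) :=
  ⟨isFiniteMeasure_edgeMeasure α z ϑ hz hϑ hmean, edgeMeasure_setOf_fst_neg α z ϑ,
    fun _ hx y => edgeMeasure_Ici_prod_Ici α z ϑ hx y⟩

lemma IsEdgeMeasure.eq_edgeMeasure {α z : ℝ} {ϑ τ : Measure (ℝ × ℝ)} [SFinite ϑ]
    (hτ : IsEdgeMeasure α z ϑ τ) : τ = edgeMeasure α z ϑ := by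
  obtain ⟨hfin, hneg, hquad⟩ := hτ
  refine Measure.ext_of_Ici_prod_Ici fun x y => ?_
  rw [measure_Ici_prod_Ici_eq_max hneg, measure_Ici_prod_Ici_eq_max
    (edgeMeasure_setOf_fst_neg α z ϑ), hquad _ (le_max_right x 0),
    edgeMeasure_Ici_prod_Ici α z ϑ (le_max_right x 0)]

theorem stmt_0_general (α : ℝ) (ϑ : Measure (ℝ × ℝ)) [IsProbabilityMeasure ϑ]
    (hϑsupp : ϑ {p : ℝ × ℝ | p.1 < 0} = 0)
    (hϑmean : ∫⁻ p, ENNReal.ofReal p.1 ∂ϑ = ENNReal.ofReal α⁻¹)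
    (z : ℝ) (hz : 0 < z) :
    (∃! τ : Measure (ℝ × ℝ),
      IsFiniteMeasure τ ∧ τ {p : ℝ × ℝ | p.1 < 0} = 0 ∧
      ∀ x : ℝ, 0 ≤ x → ∀ y : ℝ,
        τ (Ici x ×ˢ Ici y)
          = ENNReal.ofReal α * ∫⁻ u in Ioi (0 : ℝ), ϑ (Ici (x + u / z) ×ˢ Ici (y + u))) ∧
    (∀ τ : Measure (ℝ × ℝ),
      (IsFiniteMeasure τ ∧ τ {p : ℝ × ℝ | p.1 < 0} = 0 ∧
        ∀ x : ℝ, 0 ≤ x → ∀ y : ℝ,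
          τ (Ici x ×ˢ Ici y)
            = ENNReal.ofReal α * ∫⁻ u in Ioi (0 : ℝ), ϑ (Ici (x + u / z) ×ˢ Ici (y + u))) →
      ∀ B : Set (ℝ × ℝ), MeasurableSet B → B ⊆ Hplus →
        τ B = ENNReal.ofReal α * ∫⁻ u in Ioi (0 : ℝ), ϑ (shiftSet B (u / z, u))) := by
  have hmean : ∫⁻ p, ENNReal.ofReal p.1 ∂ϑ ≠ ⊤ := hϑmean ▸ ENNReal.ofReal_ne_top
  refine ⟨⟨edgeMeasure α z ϑ, isEdgeMeasure_edgeMeasure α hz hϑsupp hmean,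
    fun τ hτ => IsEdgeMeasure.eq_edgeMeasure hτ⟩, fun τ hτ B hB hBH => ?_⟩
  rw [IsEdgeMeasure.eq_edgeMeasure hτ, edgeMeasure_apply α z ϑ hB hBH]

/-- for each `z > 0` there is a unique finite Borel measure on `ℍ₊`
satisfying the rectangle formula, and it is given by the explicit formula on all
Borel subsets of `ℍ₊`. -/
theorem stmt_0 (α : ℝ) (hα : 0 < α) (ϑ : Measure (ℝ × ℝ)) [IsProbabilityMeasure ϑ]
    (hϑsupp : ϑ {p : ℝ × ℝ | p.1 < 0} = 0)
    (hϑ0 : ϑ {p : ℝ × ℝ | p.1 = 0} = 0)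
    (hϑmean : ∫⁻ p, ENNReal.ofReal p.1 ∂ϑ = ENNReal.ofReal α⁻¹)
    (z : ℝ) (hz : 0 < z) :
    (∃! τ : Measure (ℝ × ℝ),
      IsFiniteMeasure τ ∧ τ {p : ℝ × ℝ | p.1 < 0} = 0 ∧
      ∀ x : ℝ, 0 ≤ x → ∀ y : ℝ,
        τ (Ici x ×ˢ Ici y)
          = ENNReal.ofReal α * ∫⁻ u in Ioi (0 : ℝ), ϑ (Ici (x + u / z) ×ˢ Ici (y + u))) ∧
    (∀ τ : Measure (ℝ × ℝ),
      (IsFiniteMeasure τ ∧ τ {p : ℝ × ℝ | p.1 < 0} = 0 ∧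
        ∀ x : ℝ, 0 ≤ x → ∀ y : ℝ,
          τ (Ici x ×ˢ Ici y)
            = ENNReal.ofReal α * ∫⁻ u in Ioi (0 : ℝ), ϑ (Ici (x + u / z) ×ˢ Ici (y + u))) →
      ∀ B : Set (ℝ × ℝ), MeasurableSet B → B ⊆ Hplus →
        τ B = ENNReal.ofReal α * ∫⁻ u in Ioi (0 : ℝ), ϑ (shiftSet B (u / z, u))) :=
  stmt_0_general α ϑ hϑsupp hϑmean z hz
end
end

section
/- For every z > 0, the pushforward of ϑ_e^z under the first-coordinate projection χ(x,y) = x equals z·ν_e, where ν is the first marginal of ϑ (ν(B) = ϑ(B×ℝ)) and ν_e is the excess lifetime distribution of ν; equivalently, ϑ_e^z([x,∞)×ℝ) = z ν_e([x,∞)) for all x ≥ 0. -/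
open MeasureTheory Set Filter Topology
open scoped ENNReal

noncomputable section

/-- The excess lifetime distribution of `ν` (for a measure `ν` on `[0,∞)` with mean `1/α`):
the measure on `ℝ` with Lebesgue density `v ↦ α ν([v,∞))` on `[0,∞)` and `0` on `(-∞,0)`. -/
def excessLife (α : ℝ) (ν : Measure ℝ) : Measure ℝ :=
  volume.withDensity fun v => if 0 ≤ v then ENNReal.ofReal α * ν (Ici v) else 0

lemma shiftSet_Ici_prod (x c d : ℝ) :
    shiftSet (Ici x ×ˢ (univ : Set ℝ)) (c, d) = Ici (x + c) ×ˢ (univ : Set ℝ) := by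
  ext ⟨a, b⟩
  constructor
  · rintro ⟨⟨p, q⟩, ⟨hp, -⟩, h⟩
    have h1 : p + c = a := congrArg Prod.fst h
    exact ⟨by simp only [mem_Ici] at hp ⊢; linarith, trivial⟩
  · rintro ⟨ha, -⟩
    refine ⟨(a - c, b - d), ⟨?_, trivial⟩, by simp [Prod.ext_iff]⟩
    simp only [mem_Ici] at ha ⊢; linarith

lemma subst_lintegral (f : ℝ → ℝ≥0∞) (hf : Measurable f) (x z : ℝ) (hz : 0 < z) :
    ∫⁻ u in Ioi (0 : ℝ), f (x + u / z) = ENNReal.ofReal z * ∫⁻ v in Ioi x, f v := by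
  set g : ℝ → ℝ≥0∞ := (Ioi x).indicator f with hg
  have hgm : Measurable g := hf.indicator measurableSet_Ioi
  have step1 : ∫⁻ u in Ioi (0 : ℝ), f (x + u / z) = ∫⁻ u in Ioi (0 : ℝ), g (x + u / z) := by
    refine setLIntegral_congr_fun measurableSet_Ioi (fun u hu => ?_)
    rw [hg, indicator_of_mem]
    simp only [mem_Ioi] at hu ⊢
    have : 0 < u / z := div_pos hu hz
    linarith
  have step2 : ∫⁻ u in Ioi (0 : ℝ), g (x + u / z) = ∫⁻ u, g (x + u / z) := by
    rw [← lintegral_indicator measurableSet_Ioi]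
    congr 1
    funext u
    by_cases hu : u ∈ Ioi (0 : ℝ)
    · rw [indicator_of_mem hu]
    · rw [indicator_of_notMem hu, hg, indicator_of_notMem]
      simp only [mem_Ioi, not_lt] at hu ⊢
      have : u / z ≤ 0 := div_nonpos_of_nonpos_of_nonneg hu hz.le
      linarith
  have hφ : (fun u : ℝ => x + u / z) = (fun v => x + v) ∘ (fun u => z⁻¹ * u) := by
    funext u; simp [div_eq_inv_mul]
  have step3 : ∫⁻ u, g (x + u / z) = ∫⁻ v, g v ∂(volume.map (fun u : ℝ => x + u / z)) := by
    rw [lintegral_map hgm]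
    have : Measurable fun u : ℝ => x + u / z := by fun_prop
    exact this
  have hmap : volume.map (fun u : ℝ => x + u / z) = ENNReal.ofReal z • volume := by
    rw [hφ, ← Measure.map_map (by fun_prop) (by fun_prop)]
    have h1 : Measure.map (fun u : ℝ => z⁻¹ * u) volume = ENNReal.ofReal |z⁻¹⁻¹| • volume :=
      Real.map_volume_mul_left (inv_ne_zero hz.ne')
    rw [h1, Measure.map_smul, Measure.IsAddLeftInvariant.map_add_left_eq_self x]
    congr 1
    rw [inv_inv, abs_of_pos hz]
  rw [step1, step2, step3, hmap, lintegral_smul_measure, hg, lintegral_indicator measurableSet_Ioi, smul_eq_mul]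

/-- the first-coordinate marginal of `ϑ_e^z` equals `z • ν_e`, where `ν` is the
first marginal of `ϑ` and `ν_e` its excess lifetime distribution; equivalently
`ϑ_e^z([x,∞)×ℝ) = z ν_e([x,∞))` for all `x ≥ 0`. -/
theorem stmt_2 (α : ℝ) (hα : 0 < α) (ϑ : Measure (ℝ × ℝ)) [IsProbabilityMeasure ϑ]
    (hϑsupp : ϑ {p : ℝ × ℝ | p.1 < 0} = 0)
    (hϑ0 : ϑ {p : ℝ × ℝ | p.1 = 0} = 0)
    (hϑmean : ∫⁻ p, ENNReal.ofReal p.1 ∂ϑ = ENNReal.ofReal α⁻¹)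
    (z : ℝ) (hz : 0 < z) (τ : Measure (ℝ × ℝ)) [IsFiniteMeasure τ]
    (hτsupp : τ {p : ℝ × ℝ | p.1 < 0} = 0)
    (hτ : ∀ B : Set (ℝ × ℝ), MeasurableSet B → B ⊆ Hplus →
      τ B = ENNReal.ofReal α * ∫⁻ u in Ioi (0 : ℝ), ϑ (shiftSet B (u / z, u))) :
    τ.map Prod.fst = ENNReal.ofReal z • excessLife α (ϑ.map Prod.fst) ∧
    ∀ x : ℝ, 0 ≤ x →
      τ (Ici x ×ˢ (univ : Set ℝ)) = ENNReal.ofReal z * excessLife α (ϑ.map Prod.fst) (Ici x) := by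
  set ν : Measure ℝ := ϑ.map Prod.fst with hν
  set f : ℝ → ℝ≥0∞ := fun v => ν (Ici v) with hfdef
  have hfanti : Antitone f := fun a b hab => measure_mono (Ici_subset_Ici.2 hab)
  have hf : Measurable f := hfanti.measurable
  have hϑIci : ∀ y : ℝ, ϑ (Ici y ×ˢ (univ : Set ℝ)) = f y := by
    intro y
    show ϑ (Ici y ×ˢ (univ : Set ℝ)) = ν (Ici y)
    rw [hν, Measure.map_apply measurable_fst measurableSet_Ici, Set.prod_univ]
  -- excess life of Ici x for x ≥ 0
  have hex : ∀ x : ℝ, 0 ≤ x →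
      excessLife α ν (Ici x) = ENNReal.ofReal α * ∫⁻ v in Ioi x, f v := by
    intro x hx
    rw [excessLife, withDensity_apply _ measurableSet_Ici]
    have h1 : ∫⁻ v in Ici x, (if 0 ≤ v then ENNReal.ofReal α * ν (Ici v) else 0)
        = ∫⁻ v in Ici x, ENNReal.ofReal α * f v := by
      refine setLIntegral_congr_fun measurableSet_Ici (fun v hv => ?_)
      rw [if_pos (hx.trans hv)]
    rw [h1, lintegral_const_mul _ hf]
    congr 1
    exact (setLIntegral_congr (α := ℝ) Ioi_ae_eq_Ici).symm
  -- main key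
  have key : ∀ x : ℝ, 0 ≤ x →
      τ (Ici x ×ˢ (univ : Set ℝ)) = ENNReal.ofReal z * excessLife α ν (Ici x) := by
    intro x hx
    have hB : MeasurableSet (Ici x ×ˢ (univ : Set ℝ)) :=
      measurableSet_Ici.prod MeasurableSet.univ
    have hBsub : (Ici x ×ˢ (univ : Set ℝ)) ⊆ Hplus := by
      rintro ⟨a, b⟩ ⟨ha, -⟩
      exact hx.trans ha
    rw [hτ _ hB hBsub]
    have h2 : ∀ u : ℝ, ϑ (shiftSet (Ici x ×ˢ (univ : Set ℝ)) (u / z, u)) = f (x + u / z) := by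
      intro u
      rw [shiftSet_Ici_prod, hϑIci]
    simp_rw [h2]
    rw [subst_lintegral f hf x z hz, hex x hx]
    ring
  refine ⟨?_, fun x hx => key x hx⟩
  -- measure equality
  refine Measure.ext_of_Ici _ _ fun a => ?_
  rw [Measure.map_apply measurable_fst measurableSet_Ici, Measure.smul_apply, smul_eq_mul,
    ← Set.prod_univ]
  rcases le_or_gt 0 a with ha | ha
  · exact key a ha
  · -- a < 0 : both sides equal the value at 0
    have hτa : τ (Ici a ×ˢ (univ : Set ℝ)) = τ (Ici (0:ℝ) ×ˢ (univ : Set ℝ)) := by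
      refine le_antisymm ?_ (measure_mono (prod_mono (Ici_subset_Ici.2 ha.le) subset_rfl))
      calc τ (Ici a ×ˢ (univ : Set ℝ))
          ≤ τ ((Ici (0:ℝ) ×ˢ (univ : Set ℝ)) ∪ {p : ℝ × ℝ | p.1 < 0}) := by
            refine measure_mono ?_
            rintro ⟨p, q⟩ ⟨hp, -⟩
            rcases le_or_gt 0 p with h | h
            · exact Or.inl ⟨h, trivial⟩
            · exact Or.inr h
        _ ≤ τ (Ici (0:ℝ) ×ˢ (univ : Set ℝ)) + τ {p : ℝ × ℝ | p.1 < 0} := measure_union_le _ _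
        _ = τ (Ici (0:ℝ) ×ˢ (univ : Set ℝ)) := by rw [hτsupp, add_zero]
    have hexa : excessLife α ν (Ici a) = excessLife α ν (Ici (0:ℝ)) := by
      have hIco : excessLife α ν (Ico a 0) = 0 := by
        rw [excessLife, withDensity_apply _ measurableSet_Ico]
        have : ∫⁻ v in Ico a 0, (if 0 ≤ v then ENNReal.ofReal α * ν (Ici v) else 0)
            = ∫⁻ v in Ico a (0:ℝ), 0 := by
          refine setLIntegral_congr_fun measurableSet_Ico (fun v hv => ?_)
          rw [if_neg (not_le.2 hv.2)]
        rw [this, lintegral_zero]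
      have hsplit : Ici a = Ico a 0 ∪ Ici (0:ℝ) := (Ico_union_Ici_eq_Ici ha.le).symm
      refine le_antisymm ?_ (measure_mono (Ici_subset_Ici.2 ha.le))
      calc excessLife α ν (Ici a) = excessLife α ν (Ico a 0 ∪ Ici (0:ℝ)) := by rw [← hsplit]
        _ ≤ excessLife α ν (Ico a 0) + excessLife α ν (Ici (0:ℝ)) := measure_union_le _ _
        _ = excessLife α ν (Ici (0:ℝ)) := by rw [hIco, zero_add]
    rw [hτa, hexa]
    exact key 0 le_rfl
end
end

section
/- For every z > 0 and every x ∈ [0,∞), the measure ϑ_e^z assigns zero mass to the vertical line {x} × ℝ, i.e., ϑ_e^z({x} × ℝ) = 0. -/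
/-! A translate of a vertical line is a vertical line, and an s-finite measure charges only
countably many vertical lines. Along `u ↦ (u / z, u)` the line `{x} × ℝ` sweeps through the lines
`{x + u / z} × ℝ`, which are pairwise distinct, so the integrand defining `ϑ_e^z({x} × ℝ)`
vanishes for all but countably many `u`. -/

open MeasureTheory Set Filter Topology

noncomputable section

theorem singleton_prod_univ_subset_Hplus {x : ℝ} (hx : 0 ≤ x) :
    ({x} : Set ℝ) ×ˢ (univ : Set ℝ) ⊆ Hplus := by
  rintro p ⟨rfl, -⟩
  exact hx

theorem shiftSet_singleton_prod_univ (x : ℝ) (w : ℝ × ℝ) :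
    shiftSet (({x} : Set ℝ) ×ˢ univ) w = ({x + w.1} : Set ℝ) ×ˢ univ := by
  ext p
  constructor
  · rintro ⟨q, ⟨hq, -⟩, rfl⟩
    exact ⟨by simp_all, trivial⟩
  · rintro ⟨hp, -⟩
    refine ⟨(x, p.2 - w.2), ⟨rfl, trivial⟩, ?_⟩
    ext <;> simp_all

theorem countable_setOf_measure_singleton_prod_univ_pos {α β : Type*} [MeasurableSpace α]
    [MeasurableSingletonClass α] [MeasurableSpace β] (μ : Measure (α × β)) [SFinite μ] :
    {t : α | 0 < μ ({t} ×ˢ univ)}.Countable := by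
  simp only [prod_univ]
  exact Measure.countable_meas_level_set_pos measurable_fst

theorem ae_measure_singleton_add_div_prod_univ_eq_zero {β : Type*} [MeasurableSpace β]
    (μ : Measure (ℝ × β)) [SFinite μ] (x : ℝ) {z : ℝ} (hz : z ≠ 0) :
    ∀ᵐ u : ℝ, μ ({x + u / z} ×ˢ univ) = 0 := by
  have hinj : Function.Injective fun u : ℝ => x + u / z := fun a b h => by
    simpa [hz] using h
  rw [ae_iff]
  refine Countable.measure_zero ?_ _
  exact ((countable_setOf_measure_singleton_prod_univ_pos μ).preimage hinj).mono
    fun u hu => pos_iff_ne_zero.mpr hu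

theorem stmt_3_general (α : ℝ) (ϑ : Measure (ℝ × ℝ)) [IsProbabilityMeasure ϑ]
    (z : ℝ) (hz : 0 < z) (τ : Measure (ℝ × ℝ))
    (hτ : ∀ B : Set (ℝ × ℝ), MeasurableSet B → B ⊆ Hplus →
      τ B = ENNReal.ofReal α * ∫⁻ u in Ioi (0 : ℝ), ϑ (shiftSet B (u / z, u))) :
    ∀ x : ℝ, 0 ≤ x → τ (({x} : Set ℝ) ×ˢ (univ : Set ℝ)) = 0 := by
  intro x hx
  have hline : MeasurableSet (({x} : Set ℝ) ×ˢ (univ : Set ℝ)) :=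
    (measurableSet_singleton x).prod MeasurableSet.univ
  have hzero : ∀ᵐ u ∂volume.restrict (Ioi 0),
      ϑ (shiftSet (({x} : Set ℝ) ×ˢ univ) (u / z, u)) = 0 := by
    refine ae_restrict_of_ae ?_
    simpa only [shiftSet_singleton_prod_univ] using
      ae_measure_singleton_add_div_prod_univ_eq_zero ϑ x hz.ne'
  rw [hτ _ hline (singleton_prod_univ_subset_Hplus hx), lintegral_congr_ae hzero,
    lintegral_zero, mul_zero]

/-- `ϑ_e^z` assigns zero mass to every vertical line `{x} × ℝ` with `x ≥ 0`. -/
theorem stmt_3 (α : ℝ) (hα : 0 < α) (ϑ : Measure (ℝ × ℝ)) [IsProbabilityMeasure ϑ]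
    (hϑsupp : ϑ {p : ℝ × ℝ | p.1 < 0} = 0)
    (hϑ0 : ϑ {p : ℝ × ℝ | p.1 = 0} = 0)
    (hϑmean : ∫⁻ p, ENNReal.ofReal p.1 ∂ϑ = ENNReal.ofReal α⁻¹)
    (z : ℝ) (hz : 0 < z) (τ : Measure (ℝ × ℝ)) [IsFiniteMeasure τ]
    (hτsupp : τ {p : ℝ × ℝ | p.1 < 0} = 0)
    (hτ : ∀ B : Set (ℝ × ℝ), MeasurableSet B → B ⊆ Hplus →
      τ B = ENNReal.ofReal α * ∫⁻ u in Ioi (0 : ℝ), ϑ (shiftSet B (u / z, u))) :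
    ∀ x : ℝ, 0 ≤ x → τ (({x} : Set ℝ) ×ˢ (univ : Set ℝ)) = 0 :=
  stmt_3_general α ϑ z hz τ hτ
end
end

section
/- Suppose ϑ = ν ⊗ λ is the product of a Borel probability measure ν on [0,∞) with ν({0}) = 0 and ∫ x dν(x) = 1/α, and a Borel probability measure λ on ℝ. For z > 0, let ν̄_e^z be the Borel measure on ℝ with Lebesgue density u ↦ α ν((−u z⁻¹, ∞)) for u ≤ 0 and density 0 for u > 0. Then the pushforward of ϑ_e^z under the second-coordinate projection π(x,y) = y equals the convolution λ ⋆ ν̄_e^z. -/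
open MeasureTheory Set Filter Topology

noncomputable section

/-- The measure `ν̄_e^z` on `ℝ`, with Lebesgue density `u ↦ α ν((−u z⁻¹, ∞))` for `u ≤ 0`
and density `0` for `u > 0`. -/
def nuBarE (α : ℝ) (ν : Measure ℝ) (z : ℝ) : Measure ℝ :=
  volume.withDensity fun u => if u ≤ 0 then ENNReal.ofReal α * ν (Ioi (-u / z)) else 0

/-! For measurable `A`, translating `{p ∈ ℍ₊ | p.2 ∈ A}` by `(u/z, u)` gives the rectangle
`[u/z, ∞) × (A + u)`, so the product structure of `ϑ` yields
`τ(ℝ × A) = α ∫_{u>0} ν[u/z, ∞) λ(A + u) du`. Unfolding the convolution against the density of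
`ν̄_e^z` and substituting `u ↦ -u` gives the same integral with `ν(u/z, ∞)` in place of
`ν[u/z, ∞)`; these differ only at the countably many jumps of the monotone `t ↦ ν[t, ∞)`. -/

open scoped ENNReal

lemma shiftSet_preimage_snd_inter_Hplus (A : Set ℝ) (a b : ℝ) :
    shiftSet (Prod.snd ⁻¹' A ∩ Hplus) (a, b) = Ici a ×ˢ ((· - b) ⁻¹' A) := by
  ext ⟨x, y⟩
  constructor
  · rintro ⟨⟨x', y'⟩, ⟨hy', hx'⟩, h⟩
    simp only [Prod.mk_add_mk, Prod.mk.injEq] at h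
    obtain ⟨rfl, rfl⟩ := h
    simpa [Hplus] using ⟨hx', hy'⟩
  · rintro ⟨hx, hy⟩
    refine ⟨(x - a, y - b), ⟨hy, show 0 ≤ x - a from sub_nonneg.2 hx⟩, ?_⟩
    simp

lemma ae_measure_Ici_div_eq_Ioi_div (ν : Measure ℝ) {z : ℝ} (hz : z ≠ 0) :
    ∀ᵐ u, ν (Ici (u / z)) = ν (Ioi (u / z)) :=
  ((countable_meas_le_ne_meas_lt ν id).preimage fun _ _ => (div_left_inj' hz).1).measure_zero
    volume

lemma measurable_nuBarE_density (α : ℝ) (ν : Measure ℝ) (z : ℝ) :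
    Measurable fun u : ℝ => if u ≤ 0 then ENNReal.ofReal α * ν (Ioi (-u / z)) else 0 := by
  have hanti : Antitone fun t => ν (Ioi t) := fun _ _ h => measure_mono (Ioi_subset_Ioi h)
  exact Measurable.ite measurableSet_Iic
    (measurable_const.mul (hanti.measurable.comp (measurable_neg.div_const z))) measurable_const

instance (α : ℝ) (ν : Measure ℝ) (z : ℝ) : SFinite (nuBarE α ν z) := by
  unfold nuBarE; infer_instance

lemma lintegral_nuBarE (α : ℝ) (ν : Measure ℝ) (z : ℝ) {G : ℝ → ℝ≥0∞} (hG : Measurable G) :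
    ∫⁻ v, G v ∂nuBarE α ν z = ∫⁻ u in Ioi 0, ENNReal.ofReal α * ν (Ioi (u / z)) * G (-u) := by
  rw [nuBarE, lintegral_withDensity_eq_lintegral_mul _ (measurable_nuBarE_density α ν z) hG,
    ← lintegral_neg_eq_self, setLIntegral_congr Ioi_ae_eq_Ici,
    ← lintegral_indicator measurableSet_Ici]
  congr 1 with u
  by_cases hu : 0 ≤ u
  · simp [hu, neg_div]
  · simp [hu]

lemma map_add_prod_apply {G : Type*} [MeasurableSpace G] [Add G] [MeasurableAdd₂ G]
    (μ ρ : Measure G) [SFinite μ] [SFinite ρ] {A : Set G} (hA : MeasurableSet A) :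
    (μ.prod ρ).map (fun p => p.1 + p.2) A = ∫⁻ v, μ ((· + v) ⁻¹' A) ∂ρ := by
  rw [Measure.map_apply measurable_add hA, Measure.prod_apply_symm (measurable_add hA)]
  rfl

theorem stmt_9_general (α : ℝ)
    (ν : Measure ℝ)
    (lam : Measure ℝ) [IsProbabilityMeasure lam]
    (ϑ : Measure (ℝ × ℝ)) (hϑprod : ϑ = ν.prod lam)
    (z : ℝ) (hz : 0 < z) (τ : Measure (ℝ × ℝ))
    (hτsupp : τ {p : ℝ × ℝ | p.1 < 0} = 0)
    (hτ : ∀ B : Set (ℝ × ℝ), MeasurableSet B → B ⊆ Hplus →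
      τ B = ENNReal.ofReal α * ∫⁻ u in Ioi (0 : ℝ), ϑ (shiftSet B (u / z, u))) :
    τ.map Prod.snd = ((lam.prod (nuBarE α ν z)).map fun p : ℝ × ℝ => p.1 + p.2) := by
  subst hϑprod
  ext A hA
  have hG : Measurable fun v => lam ((· + v) ⁻¹' A) :=
    measurable_measure_prodMk_right (measurable_add hA)
  have hHplus : τ Hplusᶜ = 0 := by simpa [Hplus, compl_ofPred] using hτsupp
  have hB : MeasurableSet (Prod.snd ⁻¹' A ∩ Hplus) :=
    (measurable_snd hA).inter (measurableSet_le measurable_const measurable_fst)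
  rw [Measure.map_apply measurable_snd hA, ← measure_inter_conull hHplus,
    hτ _ hB inter_subset_right, map_add_prod_apply lam _ hA, lintegral_nuBarE α ν z hG,
    ← lintegral_const_mul' _ _ ENNReal.ofReal_ne_top]
  refine setLIntegral_congr_fun_ae measurableSet_Ioi ?_
  filter_upwards [ae_measure_Ici_div_eq_Ioi_div ν hz.ne'] with u hu _
  rw [shiftSet_preimage_snd_inter_Hplus, Measure.prod_prod, hu, mul_assoc]
  simp only [sub_eq_add_neg]

/-- if `ϑ = ν ⊗ λ` is a product, the second-coordinate marginal of `ϑ_e^z`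
is the convolution `λ ⋆ ν̄_e^z`. -/
theorem stmt_9 (α : ℝ) (hα : 0 < α)
    (ν : Measure ℝ) [IsProbabilityMeasure ν]
    (hνsupp : ν {x : ℝ | x < 0} = 0) (hνatom : ν ({0} : Set ℝ) = 0)
    (hνmean : ∫⁻ x, ENNReal.ofReal x ∂ν = ENNReal.ofReal α⁻¹)
    (lam : Measure ℝ) [IsProbabilityMeasure lam]
    (ϑ : Measure (ℝ × ℝ)) (hϑprod : ϑ = ν.prod lam)
    (z : ℝ) (hz : 0 < z) (τ : Measure (ℝ × ℝ)) [IsFiniteMeasure τ]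
    (hτsupp : τ {p : ℝ × ℝ | p.1 < 0} = 0)
    (hτ : ∀ B : Set (ℝ × ℝ), MeasurableSet B → B ⊆ Hplus →
      τ B = ENNReal.ofReal α * ∫⁻ u in Ioi (0 : ℝ), ϑ (shiftSet B (u / z, u))) :
    τ.map Prod.snd = ((lam.prod (nuBarE α ν z)).map fun p : ℝ × ℝ => p.1 + p.2) :=
  stmt_9_general α ν lam ϑ hϑprod z hz τ hτsupp hτ
end
end

section
/- Suppose ϑ = ν ⊗ δ₀ where ν is a Borel probability measure on [0,∞) with ν({0}) = 0 and ∫ x dν(x) = 1/α, and δ₀ is the Dirac measure at 0 on ℝ. Then for every z > 0 and every y ∈ ℝ: ϑ_e^z([0,∞) × (−∞,y]) = z if y ≥ 0, and ϑ_e^z([0,∞) × (−∞,y]) = z ν_e([−y z⁻¹, ∞)) if y < 0. -/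
open MeasureTheory Set Filter Topology

noncomputable section

lemma shiftSet_rect (y a b : ℝ) :
    shiftSet (Ici (0 : ℝ) ×ˢ Iic y) (a, b) = Ici a ×ˢ Iic (y + b) := by
  ext ⟨p, q⟩
  simp only [shiftSet, mem_image, mem_prod, mem_Ici, mem_Iic, Prod.ext_iff]
  constructor
  · rintro ⟨⟨x1, x2⟩, ⟨h1, h2⟩, h3, h4⟩
    simp only [Prod.fst_add, Prod.snd_add] at h1 h2 h3 h4 ⊢
    constructor <;> nlinarith
  · rintro ⟨h1, h2⟩
    refine ⟨(p - a, q - b), ⟨?_, ?_⟩, by simp, by simp⟩ <;> simp <;> linarith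

lemma lint_scale (g : ℝ → ENNReal) (hg : Measurable g) {z : ℝ} (hz : 0 < z) (c : ℝ) :
    ∫⁻ u in Ioi c, g (u / z) = ENNReal.ofReal z * ∫⁻ v in Ioi (c / z), g v := by
  have hmap : Measure.map (z * ·) volume = ENNReal.ofReal z⁻¹ • volume := by
    rw [Real.map_volume_mul_left hz.ne', abs_of_pos (inv_pos.mpr hz)]
  have hvol : (volume : Measure ℝ) = Measure.map (z * ·) (ENNReal.ofReal z • volume) := by
    rw [Measure.map_smul, hmap, smul_smul, ← ENNReal.ofReal_mul hz.le,
      mul_inv_cancel₀ hz.ne', ENNReal.ofReal_one, one_smul]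
  have hgz : Measurable fun u => g (u / z) := hg.comp (measurable_id.div_const z)
  calc ∫⁻ u in Ioi c, g (u / z)
      = ∫⁻ u, g (u / z) ∂((Measure.map (z * ·) (ENNReal.ofReal z • volume)).restrict (Ioi c)) := by
        rw [← hvol]
    _ = ∫⁻ u, g (u / z) ∂(Measure.map (z * ·)
          ((ENNReal.ofReal z • volume).restrict ((z * ·) ⁻¹' Ioi c))) := by
        rw [Measure.restrict_map (measurable_const_mul z) measurableSet_Ioi]
    _ = ∫⁻ v, g (z * v / z) ∂((ENNReal.ofReal z • volume).restrict ((z * ·) ⁻¹' Ioi c)) := by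
        rw [lintegral_map hgz (measurable_const_mul z)]
    _ = ENNReal.ofReal z * ∫⁻ v in Ioi (c / z), g v := by
        rw [preimage_const_mul_Ioi₀ c hz, Measure.restrict_smul, lintegral_smul_measure]
        congr 1
        refine lintegral_congr fun v => ?_
        congr 1
        field_simp

/-- if `ϑ = ν ⊗ δ₀`, then `ϑ_e^z([0,∞)×(−∞,y]) = z` for `y ≥ 0` and
`= z ν_e([−y z⁻¹,∞))` for `y < 0`. -/
theorem stmt_10 (α : ℝ) (hα : 0 < α)
    (ν : Measure ℝ) [IsProbabilityMeasure ν]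
    (hνsupp : ν {x : ℝ | x < 0} = 0) (hνatom : ν ({0} : Set ℝ) = 0)
    (hνmean : ∫⁻ x, ENNReal.ofReal x ∂ν = ENNReal.ofReal α⁻¹)
    (ϑ : Measure (ℝ × ℝ)) (hϑprod : ϑ = ν.prod (Measure.dirac (0 : ℝ)))
    (z : ℝ) (hz : 0 < z) (τ : Measure (ℝ × ℝ)) [IsFiniteMeasure τ]
    (hτsupp : τ {p : ℝ × ℝ | p.1 < 0} = 0)
    (hτ : ∀ B : Set (ℝ × ℝ), MeasurableSet B → B ⊆ Hplus →
      τ B = ENNReal.ofReal α * ∫⁻ u in Ioi (0 : ℝ), ϑ (shiftSet B (u / z, u))) :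
    ∀ y : ℝ,
      (0 ≤ y → τ (Ici (0 : ℝ) ×ˢ Iic y) = ENNReal.ofReal z) ∧
      (y < 0 → τ (Ici (0 : ℝ) ×ˢ Iic y)
          = ENNReal.ofReal z * excessLife α ν (Ici (-y / z))) := by
  intro y
  have gmeas : Measurable fun v : ℝ => ν (Ici v) :=
    Antitone.measurable fun a b hab => measure_mono (Ici_subset_Ici.mpr hab)
  have hval : ∀ u : ℝ, ϑ (shiftSet (Ici (0 : ℝ) ×ˢ Iic y) (u / z, u))
      = ν (Ici (u / z)) * (if 0 ≤ y + u then 1 else 0) := by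
    intro u
    rw [shiftSet_rect, hϑprod, Measure.prod_prod,
      Measure.dirac_apply' _ measurableSet_Iic]
    by_cases h : 0 ≤ y + u <;> simp [indicator, mem_Iic, h]
  have key := hτ (Ici (0 : ℝ) ×ˢ Iic y) (measurableSet_Ici.prod measurableSet_Iic)
    (fun p hp => hp.1)
  simp only [hval] at key
  -- layer cake for ν
  have hlayer : ∫⁻ t in Ioi (0 : ℝ), ν (Ici t) = ENNReal.ofReal α⁻¹ := by
    rw [← hνmean]
    have := lintegral_eq_lintegral_meas_le ν (f := id)
      (by
        filter_upwards [measure_eq_zero_iff_ae_notMem.mp hνsupp] with x hx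
        simpa using not_lt.mp hx)
      measurable_id.aemeasurable
    simpa [Ici] using this.symm
  constructor
  · intro hy
    have : ∀ u ∈ Ioi (0 : ℝ),
        ν (Ici (u / z)) * (if 0 ≤ y + u then 1 else 0) = ν (Ici (u / z)) := by
      intro u hu
      rw [if_pos (by simp only [mem_Ioi] at hu; linarith), mul_one]
    rw [setLIntegral_congr_fun measurableSet_Ioi this] at key
    rw [key, lint_scale _ gmeas hz 0, zero_div, hlayer, ← mul_assoc,
      mul_comm (ENNReal.ofReal α), mul_assoc, ← ENNReal.ofReal_mul hα.le,
      mul_inv_cancel₀ hα.ne', ENNReal.ofReal_one, mul_one]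
  · intro hy
    have hmy : 0 < -y := by linarith
    have hstep : ∀ u ∈ Ioi (0 : ℝ),
        ν (Ici (u / z)) * (if 0 ≤ y + u then 1 else 0)
          = (Ici (-y)).indicator (fun u => ν (Ici (u / z))) u := by
      intro u _
      by_cases h : 0 ≤ y + u
      · rw [if_pos h, mul_one, indicator_of_mem (by simp only [mem_Ici]; linarith)]
      · rw [if_neg h, mul_zero, indicator_of_notMem (by simp only [mem_Ici]; intro hc; push_neg at h; linarith)]
    have hint : Ici (-y) ∩ Ioi (0 : ℝ) = Ici (-y) :=
      inter_eq_left.mpr fun x hx => lt_of_lt_of_le hmy hx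
    rw [setLIntegral_congr_fun measurableSet_Ioi hstep,
      lintegral_indicator measurableSet_Ici, Measure.restrict_restrict measurableSet_Ici,
      hint, MeasureTheory.Measure.restrict_congr_set Ioi_ae_eq_Ici.symm] at key
    have hIoi : ∫⁻ u in Ioi (-y), ν (Ici (u / z))
        = ENNReal.ofReal z * ∫⁻ v in Ioi (-y / z), ν (Ici v) :=
      lint_scale _ gmeas hz (-y)
    have hEL : excessLife α ν (Ici (-y / z))
        = ENNReal.ofReal α * ∫⁻ v in Ioi (-y / z), ν (Ici v) := by
      rw [excessLife, withDensity_apply _ measurableSet_Ici,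
        ← MeasureTheory.Measure.restrict_congr_set Ioi_ae_eq_Ici]
      rw [← lintegral_const_mul _ gmeas]
      refine setLIntegral_congr_fun measurableSet_Ioi ?_
      intro v hv
      dsimp only
      rw [if_pos]
      exact le_of_lt (lt_of_lt_of_le (div_pos hmy hz) (le_of_lt hv))
    rw [key, hIoi, hEL]
    ring
end
end

section
/- Suppose ϑ = ν ⊗ λ, where ν is the exponential distribution on [0,∞) with Lebesgue density x ↦ α e^{−αx} and λ is any Borel probability measure on ℝ. Then for every z > 0 and every y ∈ ℝ, ϑ_e^z([0,∞) × (−∞,y]) = ∫_{−∞}^0 λ((−∞, y − u]) · α e^{(α/z)u} du; that is, the second-coordinate marginal of ϑ_e^z is the convolution of λ with the measure of total mass z on (−∞,0] having density u ↦ α e^{(α/z)u}. -/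
/-!
Only the quadrants `[0,∞) × (−∞,y]` need computing. Translated by `(u/z, u)` such a quadrant
becomes `[u/z,∞) × (−∞,y+u]`, of `ν ⊗ λ`-measure `e^{−αu/z} λ(−∞,y+u]`, and the substitution
`u ↦ −u` gives the stated integral. As `τ` lives on `{x ≥ 0}`, this is the distribution function
of its second marginal; by Fubini it is also that of the convolution, and a finite measure on `ℝ`
is determined by its distribution function.
-/

open MeasureTheory Set Filter Topology

noncomputable section

open ProbabilityTheory
open scoped ENNReal

lemma withDensity_ite_eq_expMeasure (r : ℝ) :
    (volume.withDensity fun x => if 0 ≤ x then ENNReal.ofReal (r * Real.exp (-(r * x))) else 0)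
      = expMeasure r := by
  congr 1 with x
  change _ = exponentialPDF r x
  rw [exponentialPDF_eq]
  split_ifs <;> simp

lemma expMeasure_Ici {r a : ℝ} (hr : 0 < r) (ha : 0 ≤ a) :
    expMeasure r (Ici a) = ENNReal.ofReal (Real.exp (-(r * a))) := by
  have := isProbabilityMeasure_expMeasure hr
  have hac : expMeasure r ≪ volume := withDensity_absolutelyContinuous _ _
  have hexp_le_one : Real.exp (-(r * a)) ≤ 1 := Real.exp_le_one_iff.2 (by nlinarith)
  rw [← measure_congr (hac.ae_eq Ioi_ae_eq_Ici), ← compl_Iic,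
    prob_compl_eq_one_sub measurableSet_Iic, ← ofReal_cdf, cdf_expMeasure_eq hr, if_pos ha,
    ← ENNReal.ofReal_one, ← ENNReal.ofReal_sub _ (sub_nonneg.2 hexp_le_one), sub_sub_cancel]

lemma shiftSet_Ici_prod_Iic (a b : ℝ) (w : ℝ × ℝ) :
    shiftSet (Ici a ×ˢ Iic b) w = Ici (a + w.1) ×ˢ Iic (b + w.2) := by
  ext p
  simp only [shiftSet, mem_image, mem_prod, mem_Ici, mem_Iic]
  constructor
  · rintro ⟨q, ⟨hq₁, hq₂⟩, rfl⟩
    exact ⟨by simpa using hq₁, by simpa using hq₂⟩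
  · rintro ⟨hp₁, hp₂⟩
    exact ⟨p - w, ⟨by simpa [le_sub_iff_add_le] using hp₁, by simpa [sub_le_iff_le_add] using hp₂⟩,
      by simp⟩

lemma lintegral_comp_neg_Ioi (c : ℝ) (f : ℝ → ℝ≥0∞) :
    ∫⁻ x in Ioi c, f (-x) = ∫⁻ x in Iic (-c), f x := by
  rw [(Measure.measurePreserving_neg volume).setLIntegral_comp_emb
    (Homeomorph.neg ℝ).measurableEmbedding, image_neg_eq_neg, neg_Ioi]
  exact setLIntegral_congr Iio_ae_eq_Iic

namespace MeasureTheory.Measure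

lemma map_snd_eq_of_fst_nonneg {μ : Measure (ℝ × ℝ)} (hμ : μ {p | p.1 < 0} = 0)
    {s : Set ℝ} (hs : MeasurableSet s) : μ.map Prod.snd s = μ (Ici 0 ×ˢ s) := by
  rw [map_apply measurable_snd hs, Set.prod_eq, inter_comm,
    measure_inter_conull (t := Prod.fst ⁻¹' Ici 0)]
  convert hμ using 2
  ext p
  simp

lemma conv_apply_Iic {μ κ : Measure ℝ} [SFinite μ] [SFinite κ] (y : ℝ) :
    (μ ∗ κ) (Iic y) = ∫⁻ v, μ (Iic (y - v)) ∂κ := by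
  rw [conv, map_apply (by fun_prop) measurableSet_Iic, prod_apply_symm (measurableSet_Iic.preimage (by fun_prop))]
  congr 1 with v
  congr 1 with x
  simp [le_sub_iff_add_le]

lemma conv_withDensity_apply_Iic {μ : Measure ℝ} [SFinite μ] {g : ℝ → ℝ≥0∞}
    (hg : Measurable g) (s : Set ℝ) (y : ℝ) :
    (μ ∗ (volume.restrict s).withDensity g) (Iic y) = ∫⁻ v in s, μ (Iic (y - v)) * g v := by
  have hμ : Antitone fun v => μ (Iic (y - v)) :=
    fun a b hab => measure_mono (Iic_subset_Iic.2 (by linarith))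
  rw [conv_apply_Iic, lintegral_withDensity_eq_lintegral_mul _ hg hμ.measurable]
  simp_rw [Pi.mul_apply, mul_comm]

end MeasureTheory.Measure

lemma lintegral_Ioi_expMeasure_prod_shiftSet {r z : ℝ} (hr : 0 < r) (hz : 0 < z)
    (lam : Measure ℝ) [SFinite lam] (y : ℝ) :
    ENNReal.ofReal r * ∫⁻ u in Ioi 0, (expMeasure r).prod lam (shiftSet (Ici 0 ×ˢ Iic y) (u / z, u))
      = ∫⁻ u in Iic 0, lam (Iic (y - u)) * ENNReal.ofReal (r * Real.exp (r / z * u)) := by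
  have hshift : ∀ u ∈ Ioi (0 : ℝ),
      (expMeasure r).prod lam (shiftSet (Ici 0 ×ˢ Iic y) (u / z, u))
        = ENNReal.ofReal (Real.exp (-(r * (u / z)))) * lam (Iic (y + u)) := fun u hu => by
    rw [shiftSet_Ici_prod_Iic, Measure.prod_prod, zero_add,
      expMeasure_Ici hr (div_nonneg hu.le hz.le)]
  rw [setLIntegral_congr_fun measurableSet_Ioi hshift,
    ← lintegral_const_mul' _ _ ENNReal.ofReal_ne_top, show Iic (0 : ℝ) = Iic (-0) by simp,
    ← lintegral_comp_neg_Ioi]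
  refine setLIntegral_congr_fun measurableSet_Ioi fun u _ => ?_
  rw [← mul_assoc, ← ENNReal.ofReal_mul hr.le, mul_comm]
  congr 3 <;> ring_nf

/-- if `ϑ = ν ⊗ λ` with `ν` exponential of rate `α`, then
`ϑ_e^z([0,∞)×(−∞,y]) = ∫_{−∞}^0 λ((−∞,y−u]) α e^{(α/z)u} du`; that is, the second-coordinate
marginal of `ϑ_e^z` is the convolution of `λ` with the (mass `z`) exponential measure on
`(−∞,0]` with density `u ↦ α e^{(α/z)u}`. -/
theorem stmt_11 (α : ℝ) (hα : 0 < α)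
    (ν : Measure ℝ)
    (hν : ν = volume.withDensity fun x =>
      if 0 ≤ x then ENNReal.ofReal (α * Real.exp (-(α * x))) else 0)
    (lam : Measure ℝ) [IsProbabilityMeasure lam]
    (ϑ : Measure (ℝ × ℝ)) (hϑprod : ϑ = ν.prod lam)
    (z : ℝ) (hz : 0 < z) (τ : Measure (ℝ × ℝ)) [IsFiniteMeasure τ]
    (hτsupp : τ {p : ℝ × ℝ | p.1 < 0} = 0)
    (hτ : ∀ B : Set (ℝ × ℝ), MeasurableSet B → B ⊆ Hplus →
      τ B = ENNReal.ofReal α * ∫⁻ u in Ioi (0 : ℝ), ϑ (shiftSet B (u / z, u))) :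
    (∀ y : ℝ,
      τ (Ici (0 : ℝ) ×ˢ Iic y)
        = ∫⁻ u in Iic (0 : ℝ), lam (Iic (y - u)) * ENNReal.ofReal (α * Real.exp (α / z * u))) ∧
    τ.map Prod.snd
      = ((lam.prod (volume.withDensity fun u =>
            if u ≤ 0 then ENNReal.ofReal (α * Real.exp (α / z * u)) else 0)).map
          fun p : ℝ × ℝ => p.1 + p.2) := by
  rw [withDensity_ite_eq_expMeasure] at hν
  subst hν hϑprod
  have hquadrant : ∀ y : ℝ, τ (Ici (0 : ℝ) ×ˢ Iic y)
      = ∫⁻ u in Iic (0 : ℝ), lam (Iic (y - u)) * ENNReal.ofReal (α * Real.exp (α / z * u)) :=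
    fun y => by
      rw [hτ _ (measurableSet_Ici.prod measurableSet_Iic) fun p hp => hp.1,
        lintegral_Ioi_expMeasure_prod_shiftSet hα hz]
  refine ⟨hquadrant, Measure.ext_of_Iic _ _ fun y => ?_⟩
  rw [Measure.map_snd_eq_of_fst_nonneg hτsupp measurableSet_Iic, hquadrant, ← Measure.conv,
    show (fun u : ℝ => if u ≤ 0 then ENNReal.ofReal (α * Real.exp (α / z * u)) else 0)
      = (Iic 0).indicator fun u => ENNReal.ofReal (α * Real.exp (α / z * u)) by
        ext u; simp [indicator_apply],
    withDensity_indicator measurableSet_Iic,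
    Measure.conv_withDensity_apply_Iic (by fun_prop)]
end
end

section
/- Let M ≥ 1, z ∈ (0, M], ε ∈ (0,1), and K > 0 be such that the finite Borel measure ξ₀ on ℍ₊ satisfies ξ₀([K M⁻¹, ∞) × ℝ) ≤ ε and such that α ∫_K^∞ ϑ([s M⁻¹, ∞) × ℝ) ds ≤ ε. Define, for t ≥ 0 and Borel B ⊆ ℍ₊, ζ(t)(B) = ξ₀(B + (t z⁻¹, t)) + α ∫₀^t ϑ(B + (s z⁻¹, s)) ds. Then for every t > K, the Prohorov-type distance satisfies d[ζ(t), ϑ_e^z] ≤ ε; that is, for every closed B ⊆ ℍ₊ one has ζ(t)(B) ≤ ϑ_e^z(B^ε) + ε and ϑ_e^z(B) ≤ ζ(t)(B^ε) + ε. -/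
open MeasureTheory Set Filter Topology

noncomputable section

/-- The `ε`-enlargement of `B` in `ℍ₊`: `B^ε = {w ∈ ℍ₊ : inf_{b ∈ B} ‖w − b‖ < ε}`. -/
def enl (B : Set (ℝ × ℝ)) (ε : ℝ) : Set (ℝ × ℝ) :=
  {w | 0 ≤ w.1 ∧ EMetric.infEdist w B < ENNReal.ofReal ε}

lemma shiftSet_subset_strip {B : Set (ℝ × ℝ)} (hB : B ⊆ Hplus) (c d : ℝ) :
    shiftSet B (c, d) ⊆ Ici c ×ˢ (univ : Set ℝ) := by
  rintro _ ⟨b, hb, rfl⟩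
  refine ⟨?_, trivial⟩
  have : 0 ≤ b.1 := hB hb
  simp only [Prod.fst_add, mem_Ici]
  linarith

lemma enl_measurable (B : Set (ℝ × ℝ)) (ε : ℝ) : MeasurableSet (enl B ε) := by
  have h1 : MeasurableSet {w : ℝ × ℝ | 0 ≤ w.1} :=
    measurableSet_le measurable_const measurable_fst
  have h2 : IsOpen {w : ℝ × ℝ | EMetric.infEdist w B < ENNReal.ofReal ε} :=
    isOpen_lt EMetric.continuous_infEdist continuous_const
  have : enl B ε = {w : ℝ × ℝ | 0 ≤ w.1} ∩
      {w : ℝ × ℝ | EMetric.infEdist w B < ENNReal.ofReal ε} := rfl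
  rw [this]
  exact h1.inter h2.measurableSet

/-- a quantitative steady-state estimate: under the stated bounds on `ξ₀`
and the tail of `ϑ`, for every `t > K` and every closed `B ⊆ ℍ₊` one has
`ζ(t)(B) ≤ ϑ_e^z(B^ε) + ε` and `ϑ_e^z(B) ≤ ζ(t)(B^ε) + ε`, i.e. `d[ζ(t), ϑ_e^z] ≤ ε`. -/
theorem stmt_16 (α : ℝ) (hα : 0 < α) (ϑ : Measure (ℝ × ℝ)) [IsProbabilityMeasure ϑ]
    (hϑsupp : ϑ {p : ℝ × ℝ | p.1 < 0} = 0)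
    (hϑ0 : ϑ {p : ℝ × ℝ | p.1 = 0} = 0)
    (hϑmean : ∫⁻ p, ENNReal.ofReal p.1 ∂ϑ = ENNReal.ofReal α⁻¹)
    (M : ℝ) (hM : 1 ≤ M) (z : ℝ) (hz : 0 < z) (hzM : z ≤ M)
    (ε : ℝ) (hε : 0 < ε) (hε1 : ε < 1) (K : ℝ) (hK : 0 < K)
    (ξ₀ : Measure (ℝ × ℝ)) [IsFiniteMeasure ξ₀] (hξ₀supp : ξ₀ {p : ℝ × ℝ | p.1 < 0} = 0)
    (hξ₀K : ξ₀ (Ici (K / M) ×ˢ (univ : Set ℝ)) ≤ ENNReal.ofReal ε)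
    (hϑK : ENNReal.ofReal α * ∫⁻ s in Ioi K, ϑ (Ici (s / M) ×ˢ (univ : Set ℝ))
      ≤ ENNReal.ofReal ε)
    (τ : Measure (ℝ × ℝ)) [IsFiniteMeasure τ]
    (hτsupp : τ {p : ℝ × ℝ | p.1 < 0} = 0)
    (hτ : ∀ B : Set (ℝ × ℝ), MeasurableSet B → B ⊆ Hplus →
      τ B = ENNReal.ofReal α * ∫⁻ u in Ioi (0 : ℝ), ϑ (shiftSet B (u / z, u)))
    (ζ : ℝ → Measure (ℝ × ℝ))
    (hζ : ∀ t : ℝ, 0 ≤ t → ∀ B : Set (ℝ × ℝ), MeasurableSet B → B ⊆ Hplus →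
      ζ t B = ξ₀ (shiftSet B (t / z, t))
        + ENNReal.ofReal α * ∫⁻ s in Ioc (0 : ℝ) t, ϑ (shiftSet B (s / z, s))) :
    ∀ t : ℝ, K < t → ∀ B : Set (ℝ × ℝ), IsClosed B → B ⊆ Hplus →
      ζ t B ≤ τ (enl B ε) + ENNReal.ofReal ε ∧
      τ B ≤ ζ t (enl B ε) + ENNReal.ofReal ε := by
  intro t ht B hBclosed hBH
  have ht0 : (0:ℝ) < t := hK.trans ht
  have hMpos : (0:ℝ) < M := lt_of_lt_of_le one_pos hM
  have hBm : MeasurableSet B := hBclosed.measurableSet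
  have henlm : MeasurableSet (enl B ε) := enl_measurable B ε
  have henlH : enl B ε ⊆ Hplus := fun w hw => hw.1
  have hBsub : B ⊆ enl B ε := fun b hb =>
    ⟨hBH hb, by
      rw [show EMetric.infEdist b B = 0 from EMetric.infEdist_zero_of_mem hb]
      exact ENNReal.ofReal_pos.mpr hε⟩
  have hζE := hζ t ht0.le (enl B ε) henlm henlH
  have hζB := hζ t ht0.le B hBm hBH
  have hτB := hτ B hBm hBH
  have hτE := hτ (enl B ε) henlm henlH
  have hpt : ∀ u : ℝ, ϑ (shiftSet B (u / z, u)) ≤ ϑ (shiftSet (enl B ε) (u / z, u)) :=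
    fun u => measure_mono (image_mono hBsub)
  constructor
  · -- ζ t B ≤ τ (enl B ε) + ε
    rw [hζB, hτE]
    have h1 : ξ₀ (shiftSet B (t / z, t)) ≤ ENNReal.ofReal ε := by
      refine le_trans (measure_mono ?_) hξ₀K
      refine (shiftSet_subset_strip hBH (t / z) t).trans (prod_mono_left ?_)
      refine Ici_subset_Ici.mpr ?_
      have h1 : K / M ≤ K / z := by gcongr
      have h2 : K / z ≤ t / z := by gcongr
      linarith
    have h2 : ENNReal.ofReal α * ∫⁻ s in Ioc (0:ℝ) t, ϑ (shiftSet B (s / z, s)) ≤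
        ENNReal.ofReal α * ∫⁻ u in Ioi (0:ℝ), ϑ (shiftSet (enl B ε) (u / z, u)) := by
      refine mul_le_mul_right ?_ _
      refine le_trans (lintegral_mono_set Ioc_subset_Ioi_self) (lintegral_mono fun u => hpt u)
    calc ξ₀ (shiftSet B (t / z, t))
        + ENNReal.ofReal α * ∫⁻ s in Ioc (0:ℝ) t, ϑ (shiftSet B (s / z, s))
        ≤ ENNReal.ofReal ε
          + ENNReal.ofReal α * ∫⁻ u in Ioi (0:ℝ), ϑ (shiftSet (enl B ε) (u / z, u)) :=
          add_le_add h1 h2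
      _ = _ := add_comm _ _
  · -- τ B ≤ ζ t (enl B ε) + ε
    rw [hτB, hζE]
    have hsplit : ∫⁻ u in Ioi (0:ℝ), ϑ (shiftSet B (u / z, u)) =
        (∫⁻ u in Ioc (0:ℝ) t, ϑ (shiftSet B (u / z, u)))
          + ∫⁻ u in Ioi t, ϑ (shiftSet B (u / z, u)) := by
      rw [← Ioc_union_Ioi_eq_Ioi ht0.le,
        lintegral_union measurableSet_Ioi Ioc_disjoint_Ioi_same]
    rw [hsplit, mul_add]
    have htail : ENNReal.ofReal α * ∫⁻ u in Ioi t, ϑ (shiftSet B (u / z, u))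
        ≤ ENNReal.ofReal ε := by
      refine le_trans (mul_le_mul_right ?_ _) hϑK
      have hg : Measurable fun u : ℝ => ϑ (Ici (u / M) ×ˢ (univ : Set ℝ)) := by
        have : Antitone fun u : ℝ => ϑ (Ici (u / M) ×ˢ (univ : Set ℝ)) := by
          intro a b hab
          refine measure_mono (prod_mono_left (Ici_subset_Ici.mpr (by gcongr)))
        exact this.measurable
      calc ∫⁻ u in Ioi t, ϑ (shiftSet B (u / z, u))
          ≤ ∫⁻ u in Ioi t, ϑ (Ici (u / M) ×ˢ (univ : Set ℝ)) := by
            refine setLIntegral_mono hg fun u hu => ?_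
            have hu0 : (0:ℝ) ≤ u := le_of_lt (lt_trans ht0 hu)
            refine measure_mono ((shiftSet_subset_strip hBH (u / z) u).trans
              (prod_mono_left (Ici_subset_Ici.mpr (by gcongr))))
        _ ≤ ∫⁻ u in Ioi K, ϑ (Ici (u / M) ×ˢ (univ : Set ℝ)) :=
            lintegral_mono_set (Ioi_subset_Ioi ht.le)
    have hmain : ENNReal.ofReal α * ∫⁻ u in Ioc (0:ℝ) t, ϑ (shiftSet B (u / z, u))
        ≤ ζ t (enl B ε) := by
      rw [hζE]
      refine le_add_of_nonneg_of_le (zero_le) (mul_le_mul_right ?_ _)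
      exact lintegral_mono fun u => hpt u
    rw [hζE] at hmain
    exact add_le_add hmain htail
end
end

section
/- For all 0 < z ≤ z' and every Borel set B ⊆ [0,∞): ϑ_e^z(B × ℝ) = (z / z') · ϑ_e^{z'}(B × ℝ); in particular, ϑ_e^z(B × ℝ) ≤ ϑ_e^{z'}(B × ℝ), and for every δ > 0, sup over x ∈ [0,∞) of ϑ_e^z([x, x+δ] × ℝ) is nondecreasing in z. -/
open MeasureTheory Set Filter Topology

noncomputable section

lemma shiftSet_prod_univ (B : Set ℝ) (a b : ℝ) :
    shiftSet (B ×ˢ (univ : Set ℝ)) (a, b) = {p : ℝ × ℝ | p.1 - a ∈ B} := by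
  ext ⟨x, y⟩
  constructor
  · rintro ⟨⟨q1, q2⟩, ⟨hq1, -⟩, heq⟩
    have hx := congrArg Prod.fst heq
    simp only [Prod.fst_add] at hx
    have : x - a = q1 := by linarith
    simpa [this] using hq1
  · intro h
    exact ⟨(x - a, y - b), ⟨h, trivial⟩, by simp [Prod.ext_iff]⟩

lemma cov (g : ℝ → ENNReal) (hg : Measurable g) (z : ℝ) (hz : 0 < z) :
    ∫⁻ u in Ioi (0 : ℝ), g (u / z) = ENNReal.ofReal z * ∫⁻ t in Ioi (0 : ℝ), g t := by
  have hz0 : (z : ℝ)⁻¹ ≠ 0 := inv_ne_zero hz.ne'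
  have hmap : Measure.map (fun u : ℝ => z⁻¹ * u) (volume.restrict (Ioi (0 : ℝ)))
      = ENNReal.ofReal z • volume.restrict (Ioi (0 : ℝ)) := by
    have h1 : (fun u : ℝ => z⁻¹ * u) ⁻¹' (Ioi 0) = Ioi (0 : ℝ) := by
      ext u
      simp only [mem_preimage, mem_Ioi]
      constructor <;> intro h <;> nlinarith [inv_pos.mpr hz]
    rw [← h1, ← Measure.restrict_map (measurable_const_mul _) measurableSet_Ioi,
      Real.map_volume_mul_left hz0, h1]
    simp [abs_of_pos hz, Measure.restrict_smul]
  calc ∫⁻ u in Ioi (0 : ℝ), g (u / z)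
      = ∫⁻ u in Ioi (0 : ℝ), g (z⁻¹ * u) := by
        simp_rw [div_eq_inv_mul]
    _ = ∫⁻ t, g t ∂(Measure.map (fun u : ℝ => z⁻¹ * u) (volume.restrict (Ioi (0 : ℝ)))) :=
        (lintegral_map hg (measurable_const_mul _)).symm
    _ = ENNReal.ofReal z * ∫⁻ t in Ioi (0 : ℝ), g t := by
        rw [hmap]; simp [lintegral_smul_measure]

/-- for `0 < z ≤ z'` and Borel `B ⊆ [0,∞)`,
`ϑ_e^z(B×ℝ) = (z/z') ϑ_e^{z'}(B×ℝ)`; in particular `ϑ_e^z(B×ℝ) ≤ ϑ_e^{z'}(B×ℝ)`, and for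
every `δ > 0` the quantity `sup_{x ≥ 0} ϑ_e^z([x,x+δ]×ℝ)` is nondecreasing in `z`. -/
theorem stmt_19 (α : ℝ) (hα : 0 < α) (ϑ : Measure (ℝ × ℝ)) [IsProbabilityMeasure ϑ]
    (hϑsupp : ϑ {p : ℝ × ℝ | p.1 < 0} = 0)
    (hϑ0 : ϑ {p : ℝ × ℝ | p.1 = 0} = 0)
    (hϑmean : ∫⁻ p, ENNReal.ofReal p.1 ∂ϑ = ENNReal.ofReal α⁻¹)
    (z z' : ℝ) (hz : 0 < z) (hzz' : z ≤ z')
    (τz : Measure (ℝ × ℝ)) [IsFiniteMeasure τz]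
    (hτzsupp : τz {p : ℝ × ℝ | p.1 < 0} = 0)
    (hτz : ∀ B : Set (ℝ × ℝ), MeasurableSet B → B ⊆ Hplus →
      τz B = ENNReal.ofReal α * ∫⁻ u in Ioi (0 : ℝ), ϑ (shiftSet B (u / z, u)))
    (τz' : Measure (ℝ × ℝ)) [IsFiniteMeasure τz']
    (hτz'supp : τz' {p : ℝ × ℝ | p.1 < 0} = 0)
    (hτz' : ∀ B : Set (ℝ × ℝ), MeasurableSet B → B ⊆ Hplus →
      τz' B = ENNReal.ofReal α * ∫⁻ u in Ioi (0 : ℝ), ϑ (shiftSet B (u / z', u))) :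
    (∀ B : Set ℝ, MeasurableSet B → B ⊆ Ici (0 : ℝ) →
      τz (B ×ˢ (univ : Set ℝ)) = ENNReal.ofReal (z / z') * τz' (B ×ˢ (univ : Set ℝ)) ∧
      τz (B ×ˢ (univ : Set ℝ)) ≤ τz' (B ×ˢ (univ : Set ℝ))) ∧
    (∀ δ : ℝ, 0 < δ →
      (⨆ x ∈ Ici (0 : ℝ), τz (Icc x (x + δ) ×ˢ (univ : Set ℝ)))
        ≤ ⨆ x ∈ Ici (0 : ℝ), τz' (Icc x (x + δ) ×ˢ (univ : Set ℝ))) := by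
  have hz' : (0 : ℝ) < z' := hz.trans_le hzz'
  have key : ∀ B : Set ℝ, MeasurableSet B → B ⊆ Ici (0 : ℝ) →
      τz (B ×ˢ (univ : Set ℝ)) = ENNReal.ofReal (z / z') * τz' (B ×ˢ (univ : Set ℝ)) ∧
      τz (B ×ˢ (univ : Set ℝ)) ≤ τz' (B ×ˢ (univ : Set ℝ)) := by
    intro B hB hBsub
    set g : ℝ → ENNReal := fun v => ϑ {p : ℝ × ℝ | p.1 - v ∈ B} with hgdef
    have hgmeas : Measurable g := by
      have hs : MeasurableSet {q : ℝ × (ℝ × ℝ) | q.2.1 - q.1 ∈ B} :=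
        ((measurable_fst.comp measurable_snd).sub measurable_fst) hB
      exact measurable_measure_prodMk_left (ν := ϑ) hs
    have hBprod : MeasurableSet (B ×ˢ (univ : Set ℝ)) := hB.prod MeasurableSet.univ
    have hBH : B ×ˢ (univ : Set ℝ) ⊆ Hplus := fun p hp => hBsub hp.1
    have eqz : τz (B ×ˢ (univ : Set ℝ))
        = ENNReal.ofReal α * (ENNReal.ofReal z * ∫⁻ t in Ioi (0 : ℝ), g t) := by
      rw [hτz _ hBprod hBH]
      congr 1
      have : ∀ u : ℝ, ϑ (shiftSet (B ×ˢ (univ : Set ℝ)) (u / z, u)) = g (u / z) := by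
        intro u; rw [shiftSet_prod_univ]
      simp_rw [this]
      exact cov g hgmeas z hz
    have eqz' : τz' (B ×ˢ (univ : Set ℝ))
        = ENNReal.ofReal α * (ENNReal.ofReal z' * ∫⁻ t in Ioi (0 : ℝ), g t) := by
      rw [hτz' _ hBprod hBH]
      congr 1
      have : ∀ u : ℝ, ϑ (shiftSet (B ×ˢ (univ : Set ℝ)) (u / z', u)) = g (u / z') := by
        intro u; rw [shiftSet_prod_univ]
      simp_rw [this]
      exact cov g hgmeas z' hz'
    have heq : τz (B ×ˢ (univ : Set ℝ)) = ENNReal.ofReal (z / z') * τz' (B ×ˢ (univ : Set ℝ)) := by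
      rw [eqz, eqz', ← mul_assoc (ENNReal.ofReal (z / z')),
        mul_comm (ENNReal.ofReal (z / z')) (ENNReal.ofReal α),
        mul_assoc (ENNReal.ofReal α), ← mul_assoc (ENNReal.ofReal (z / z')),
        ← ENNReal.ofReal_mul (by positivity), div_mul_cancel₀ _ hz'.ne']
    refine ⟨heq, ?_⟩
    calc τz (B ×ˢ (univ : Set ℝ)) = ENNReal.ofReal (z / z') * τz' (B ×ˢ (univ : Set ℝ)) := heq
      _ ≤ 1 * τz' (B ×ˢ (univ : Set ℝ)) := by
          gcongr
          rw [← ENNReal.ofReal_one]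
          exact ENNReal.ofReal_le_ofReal (by rw [div_le_one hz']; exact hzz')
      _ = τz' (B ×ˢ (univ : Set ℝ)) := one_mul _
  refine ⟨key, ?_⟩
  intro δ hδ
  refine iSup₂_mono fun x hx => ?_
  exact (key (Icc x (x + δ)) measurableSet_Icc fun y hy => le_trans hx hy.1).2
end
end
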